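/- arXiv:2103.10471 — 2 statements merged into one kernel-verified Lean document; each statement's English description precedes it below -/
import Mathlib

section
/- Let α ∈ (0,1) and let f be a pmf on ℕ with finite mean, with pgf Ψ. Let p be the pmf whose pgf is φ(z) = ∏_{i=0}^∞ Ψ(1 − α^i + α^i z), and for each i ≥ 0 let f^{(i)} be the pmf whose pgf is z ↦ Ψ(1 − α^i + α^i z). Then for every r ≥ 0, p(r) = lim_{k→∞} (f^{(0)} ∗ f^{(1)} ∗ ⋯ ∗ f^{(k−1)})(r), where ∗ denotes convolution of pmf's on ℕ, (g ∗ h)(r) = ∑_{j=0}^{r} g(j)·h(r−j). -/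
/-!
The generating function of `f⁽⁰⁾ ∗ ⋯ ∗ f⁽ᵏ⁻¹⁾` is the partial product `∏_{i<k} Ψ(1 − αⁱ + αⁱ z)`,
and since every factor lies in `[0, 1]` these partial products converge to the infinite product,
i.e. to the generating function of `p`. Coefficientwise convergence then follows from the
continuity theorem for generating functions: all coefficients lie in `[0, 1]`, so every
subsequence of the convolutions has a coefficientwise convergent subsequence; by dominated
convergence its limit has the same generating function as `p` on `(0, 1)`, hence equals `p` by the
identity theorem for power series.
-/

open Filter

/-- Convolution of two pmf's on ℕ: `(g ∗ h)(r) = ∑_{j=0}^{r} g(j)·h(r−j)`. -/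
noncomputable def conv (g h : ℕ → ℝ) : ℕ → ℝ :=
  fun r => ∑ j ∈ Finset.range (r + 1), g j * h (r - j)

/-- The `k`-factor convolution `g 0 ∗ g 1 ∗ ⋯ ∗ g (k−1)` (the empty convolution being the
point mass at `0`). -/
noncomputable def iterConv (g : ℕ → ℕ → ℝ) : ℕ → ℕ → ℝ
  | 0 => fun r => if r = 0 then 1 else 0
  | k + 1 => conv (iterConv g k) (g k)

open Topology Set

noncomputable def pgf (a : ℕ → ℝ) (z : ℝ) : ℝ := ∑' n, a n * z ^ n

lemma summable_norm_mul_pow {a : ℕ → ℝ} (ha : Summable a) (ha0 : ∀ n, 0 ≤ a n) {z : ℝ}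
    (hz : z ∈ Icc (0 : ℝ) 1) : Summable fun n => ‖a n * z ^ n‖ :=
  ha.of_nonneg_of_le (fun _ => norm_nonneg _) fun n => by
    rw [norm_mul, norm_pow, Real.norm_of_nonneg (ha0 n), Real.norm_of_nonneg hz.1]
    exact mul_le_of_le_one_right (ha0 n) (pow_le_one₀ hz.1 hz.2)

lemma hasSum_conv_mul_pow {g h : ℕ → ℝ} {z : ℝ} (hg : Summable fun n => ‖g n * z ^ n‖)
    (hh : Summable fun n => ‖h n * z ^ n‖) :
    HasSum (fun n => conv g h n * z ^ n) (pgf g z * pgf h z) := by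
  refine (hasSum_sum_range_mul_of_summable_norm hg hh).congr_fun fun n => ?_
  rw [conv, Finset.sum_mul]
  refine Finset.sum_congr rfl fun k hk => ?_
  rw [← Nat.add_sub_cancel' (Finset.mem_range_succ_iff.mp hk), pow_add, Nat.add_sub_cancel_left]
  ring

lemma iterConv_nonneg {g : ℕ → ℕ → ℝ} (hg : ∀ i n, 0 ≤ g i n) (k n : ℕ) :
    0 ≤ iterConv g k n := by
  induction k generalizing n with
  | zero => unfold iterConv; split_ifs <;> norm_num
  | succ k ih =>
    exact Finset.sum_nonneg (s := Finset.range (n + 1)) fun j _ =>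
      mul_nonneg (ih j) (hg k (n - j))

lemma hasSum_iterConv_mul_pow {g : ℕ → ℕ → ℝ} (hg0 : ∀ i n, 0 ≤ g i n)
    (hg : ∀ i, Summable (g i)) (k : ℕ) {z : ℝ} (hz : z ∈ Icc (0 : ℝ) 1) :
    HasSum (fun n => iterConv g k n * z ^ n) (∏ i ∈ Finset.range k, pgf (g i) z) := by
  induction k generalizing z with
  | zero =>
    rw [Finset.prod_range_zero]
    convert hasSum_ite_eq 0 (1 : ℝ) using 1
    funext n
    split_ifs with hn <;> simp [iterConv, hn]
  | succ k ih =>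
    have hsummable : Summable (iterConv g k) := by
      simpa using (ih (z := 1) (by simp)).summable
    rw [Finset.prod_range_succ, ← (ih hz).tsum_eq]
    exact hasSum_conv_mul_pow (summable_norm_mul_pow hsummable (iterConv_nonneg hg0 k) hz)
      (summable_norm_mul_pow (hg k) (hg0 k) hz)

lemma pgf_mem_Icc {a : ℕ → ℝ} (ha0 : ∀ n, 0 ≤ a n) (ha : HasSum a 1) {z : ℝ}
    (hz : z ∈ Icc (0 : ℝ) 1) : pgf a z ∈ Icc (0 : ℝ) 1 := by
  have hle : ∀ n, a n * z ^ n ≤ a n :=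
    fun n => mul_le_of_le_one_right (ha0 n) (pow_le_one₀ hz.1 hz.2)
  refine ⟨tsum_nonneg fun n => mul_nonneg (ha0 n) (pow_nonneg hz.1 n), ?_⟩
  calc pgf a z ≤ ∑' n, a n :=
        (summable_norm_mul_pow ha.summable ha0 hz).of_norm.tsum_le_tsum hle ha.summable
    _ = 1 := ha.tsum_eq

lemma abs_le_one_of_hasSum_one {a : ℕ → ℝ} (ha0 : ∀ n, 0 ≤ a n) (ha : HasSum a 1) (n : ℕ) :
    |a n| ≤ 1 :=
  abs_le.2 ⟨by linarith [ha0 n], le_hasSum ha n fun j _ => ha0 j⟩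

lemma Real.multipliable_of_mem_Icc {ι : Type*} {f : ι → ℝ} (hf : ∀ i, f i ∈ Icc (0 : ℝ) 1) :
    Multipliable f :=
  ⟨_, tendsto_atTop_ciInf (Finset.prod_anti_set_of_le_one (fun i => (hf i).1) fun i => (hf i).2)
    ⟨0, forall_mem_range.2 fun _ => Finset.prod_nonneg fun i _ => (hf i).1⟩⟩

lemma hasFPowerSeriesOnBall_pgf {a : ℕ → ℝ} {C : ℝ} (ha : ∀ n, |a n| ≤ C) :
    HasFPowerSeriesOnBall (pgf a) (FormalMultilinearSeries.ofScalars ℝ a) 0 1 := by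
  have hradius : 1 ≤ (FormalMultilinearSeries.ofScalars ℝ a).radius := by
    exact_mod_cast (FormalMultilinearSeries.ofScalars ℝ a).le_radius_of_bound C (r := 1) fun n => by
      simpa [FormalMultilinearSeries.ofScalars_norm] using ha n
  have h := (FormalMultilinearSeries.ofScalars ℝ a).hasFPowerSeriesOnBall
    (zero_lt_one.trans_le hradius)
  convert h.mono one_pos hradius using 1
  funext z
  exact (FormalMultilinearSeries.ofScalars_sum_eq a z).symm

lemma eq_of_eqOn_pgf {a b : ℕ → ℝ} {C : ℝ} (ha : ∀ n, |a n| ≤ C) (hb : ∀ n, |b n| ≤ C)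
    (h : EqOn (pgf a) (pgf b) (Ioo 0 1)) : a = b := by
  have hfa := (hasFPowerSeriesOnBall_pgf ha).hasFPowerSeriesAt
  have hfb := (hasFPowerSeriesOnBall_pgf hb).hasFPowerSeriesAt
  have hfreq : ∃ᶠ z in 𝓝[≠] (0 : ℝ), pgf a z = pgf b z :=
    (eventually_of_mem (Ioo_mem_nhdsGT one_pos) h).frequently.filter_mono
      (nhdsWithin_mono _ fun _ hz => ne_of_gt hz)
  exact FormalMultilinearSeries.ofScalars_series_injective ℝ ℝ
    (hfa.eq_formalMultilinearSeries_of_eventually hfb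
      ((hfa.analyticAt.frequently_eq_iff_eventually_eq hfb.analyticAt).1 hfreq))

lemma tendsto_pgf_of_tendsto {ι : Type*} {l : Filter ι} {a : ι → ℕ → ℝ} {c : ℕ → ℝ} {C : ℝ}
    (ha : ∀ k n, |a k n| ≤ C) (hc : ∀ n, Tendsto (a · n) l (𝓝 (c n))) {z : ℝ} (hz : |z| < 1) :
    Tendsto (fun k => pgf (a k) z) l (𝓝 (pgf c z)) :=
  tendsto_tsum_of_dominated_convergence
    ((summable_geometric_of_lt_one (abs_nonneg z) hz).mul_left C) (fun n => (hc n).mul_const _)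
    (Eventually.of_forall fun k n => by
      rw [norm_mul, norm_pow, Real.norm_eq_abs, Real.norm_eq_abs]
      exact mul_le_mul_of_nonneg_right (ha k n) (pow_nonneg (abs_nonneg z) n))

theorem tendsto_of_tendsto_pgf {a : ℕ → ℕ → ℝ} {b : ℕ → ℝ} {C : ℝ} (ha : ∀ k n, |a k n| ≤ C)
    (hb : ∀ n, |b n| ≤ C)
    (h : ∀ z ∈ Ioo (0 : ℝ) 1, Tendsto (fun k => pgf (a k) z) atTop (𝓝 (pgf b z))) :
    Tendsto a atTop (𝓝 b) := by
  refine tendsto_of_subseq_tendsto fun ns hns => ?_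
  obtain ⟨c, hc, φ, hφ, hlim⟩ := (isCompact_univ_pi fun _ => isCompact_Icc).tendsto_subseq
    (s := univ.pi fun _ => Icc (-C) C) (x := a ∘ ns) fun k n _ => abs_le.1 (ha (ns k) n)
  have hcb : ∀ n, |c n| ≤ C := fun n => abs_le.2 (hc n (mem_univ n))
  refine ⟨φ, ?_⟩
  suffices c = b from this ▸ hlim
  refine eq_of_eqOn_pgf hcb hb fun z hz => ?_
  have hsub := (h z hz).comp (hns.comp hφ.tendsto_atTop)
  exact tendsto_nhds_unique (tendsto_pgf_of_tendsto (fun k => ha _) (tendsto_pi_nhds.1 hlim)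
    (abs_lt.2 ⟨by linarith [hz.1], hz.2⟩)) hsub

theorem stmt_4_general (α : ℝ) (Ψ : ℝ → ℝ)
    (p : ℕ → ℝ) (hp0 : ∀ r, 0 ≤ p r) (hp1 : HasSum p 1)
    (hppgf : ∀ z ∈ Set.Icc (0 : ℝ) 1,
      (∑' r : ℕ, p r * z ^ r) = ∏' i : ℕ, Ψ (1 - α ^ i + α ^ i * z))
    (fi : ℕ → ℕ → ℝ) (hfi0 : ∀ i r, 0 ≤ fi i r) (hfi1 : ∀ i, HasSum (fi i) 1)
    (hfipgf : ∀ i, ∀ z ∈ Set.Icc (0 : ℝ) 1,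
      (∑' r : ℕ, fi i r * z ^ r) = Ψ (1 - α ^ i + α ^ i * z)) :
    ∀ r : ℕ, Tendsto (fun k => iterConv fi k r) atTop (nhds (p r)) := by
  have hpartial := hasSum_iterConv_mul_pow hfi0 fun i => (hfi1 i).summable
  have hconv1 : ∀ k, HasSum (iterConv fi k) 1 := fun k => by
    simpa [pgf, (hfi1 _).tsum_eq] using hpartial k (z := 1) (by simp)
  refine tendsto_pi_nhds.1 <| tendsto_of_tendsto_pgf
    (fun k => abs_le_one_of_hasSum_one (iterConv_nonneg hfi0 k) (hconv1 k))
    (abs_le_one_of_hasSum_one hp0 hp1) fun z hz => ?_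
  have hfactors : ∀ i, pgf (fi i) z ∈ Icc (0 : ℝ) 1 :=
    fun i => pgf_mem_Icc (hfi0 i) (hfi1 i) (Ioo_subset_Icc_self hz)
  have hprod : pgf p z = ∏' i, pgf (fi i) z := by
    rw [pgf, hppgf z (Ioo_subset_Icc_self hz)]
    exact tprod_congr fun i => (hfipgf i z (Ioo_subset_Icc_self hz)).symm
  rw [hprod]
  exact (Real.multipliable_of_mem_Icc hfactors).tendsto_prod_tprod_nat.congr fun k =>
    ((hpartial k (Ioo_subset_Icc_self hz)).tsum_eq).symm

/-- Let `α ∈ (0,1)` and let `f` be a pmf on `ℕ` with finite mean, with pgf `Ψ`.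
Let `p` be the pmf whose pgf is `φ(z) = ∏_{i=0}^∞ Ψ(1 − α^i + α^i z)`, and for `i ≥ 0` let
`f⁽ⁱ⁾` be the pmf whose pgf is `z ↦ Ψ(1 − α^i + α^i z)`. Then for every `r ≥ 0`,
`p(r) = lim_{k→∞} (f⁽⁰⁾ ∗ f⁽¹⁾ ∗ ⋯ ∗ f⁽ᵏ⁻¹⁾)(r)`. -/
theorem stmt_4 (α : ℝ) (hα : α ∈ Set.Ioo (0 : ℝ) 1)
    (f : ℕ → ℝ) (hf0 : ∀ k, 0 ≤ f k) (hf1 : HasSum f 1)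
    (hmean : Summable fun k : ℕ => (k : ℝ) * f k)
    (Ψ : ℝ → ℝ) (hΨ : ∀ z, Ψ z = ∑' k : ℕ, f k * z ^ k)
    (p : ℕ → ℝ) (hp0 : ∀ r, 0 ≤ p r) (hp1 : HasSum p 1)
    (hppgf : ∀ z ∈ Set.Icc (0 : ℝ) 1,
      (∑' r : ℕ, p r * z ^ r) = ∏' i : ℕ, Ψ (1 - α ^ i + α ^ i * z))
    (fi : ℕ → ℕ → ℝ) (hfi0 : ∀ i r, 0 ≤ fi i r) (hfi1 : ∀ i, HasSum (fi i) 1)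
    (hfipgf : ∀ i, ∀ z ∈ Set.Icc (0 : ℝ) 1,
      (∑' r : ℕ, fi i r * z ^ r) = Ψ (1 - α ^ i + α ^ i * z)) :
    ∀ r : ℕ, Tendsto (fun k => iterConv fi k r) atTop (nhds (p r)) :=
  stmt_4_general α Ψ p hp0 hp1 hppgf fi hfi0 hfi1 hfipgf
end

section
/- Let α, q, c ∈ (0,1) and let m ≥ 1 be an integer. Let Ψ(z) = ∏_{j=0}^{m−1} (1 − c q^j (1 − z)) be the pgf of the Poissonian Binomial(m, q, c) distribution. Then the marginal pgf of the stationary INAR(1) process with Poissonian Binomial(m, q, c) innovations satisfies, for every z ∈ [0,1], ∏_{i=0}^∞ Ψ(1 − α^i + α^i z) = exp( − ∑_{n=1}^∞ ((1 − q^{m n})/(1 − q^n)) · c^n / (n (1 − α^n)) · (1 − z)^n ), the series in the exponent converging absolutely. -/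
/-!
Taking logarithms, `log (1 - x rⁱ) = -∑ₖ (x rⁱ)^(k+1)/(k+1)`, and the double series over
`(k, i)` converges absolutely; summing over `i` first is a geometric series in `r^(k+1)`, which
gives `∏ᵢ (1 - x rⁱ) = exp (-∑ₖ x^(k+1) / ((k+1)(1 - r^(k+1))))`. Each factor of
`Ψ(1 - αⁱ + αⁱ z)` is `1 - c qʲ (1 - z) αⁱ`, and summing the resulting exponents over `j < m`
is again a geometric sum, in `q^(k+1)`.
-/

open Real Finset

section LogOneSubMulGeometric

variable {x r : ℝ}

lemma abs_mul_pow_lt_one (hx : |x| < 1) (hr : |r| ≤ 1) (i : ℕ) : |x * r ^ i| < 1 := by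
  rw [abs_mul, abs_pow]
  calc |x| * |r| ^ i ≤ |x| * 1 := by gcongr; exact pow_le_one₀ (abs_nonneg r) hr
    _ < 1 := by linarith

lemma summable_pow_succ_div_of_abs_lt_one (hx : |x| < 1) (hr : |r| < 1) :
    Summable fun p : ℕ × ℕ => (x * r ^ p.2) ^ (p.1 + 1) / (p.1 + 1 : ℝ) := by
  have hgeom : Summable fun p : ℕ × ℕ => |x| ^ p.1 * |r| ^ p.2 :=
    (summable_geometric_of_abs_lt_one (by rwa [abs_abs])).mul_of_nonneg
      (summable_geometric_of_abs_lt_one (by rwa [abs_abs]))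
      (fun _ => by positivity) (fun _ => by positivity)
  refine hgeom.of_norm_bounded fun ⟨k, i⟩ => ?_
  have hxk : |x| ^ (k + 1) ≤ |x| ^ k := pow_le_pow_of_le_one (abs_nonneg x) hx.le k.le_succ
  have hri : |r| ^ ((k + 1) * i) ≤ |r| ^ i :=
    pow_le_pow_of_le_one (abs_nonneg r) hr.le (Nat.le_mul_of_pos_left i k.succ_pos)
  rw [norm_eq_abs, abs_div, abs_pow, abs_mul, abs_pow, mul_pow, ← pow_mul, mul_comm i,
    abs_of_pos (by positivity : (0 : ℝ) < k + 1)]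
  calc |x| ^ (k + 1) * |r| ^ ((k + 1) * i) / (k + 1)
      ≤ |x| ^ (k + 1) * |r| ^ ((k + 1) * i) :=
        div_le_self (by positivity) (by linarith [k.cast_nonneg (α := ℝ)])
    _ ≤ |x| ^ k * |r| ^ i := mul_le_mul hxk hri (by positivity) (by positivity)

lemma hasSum_pow_succ_div_geometric (hr : |r| < 1) (k : ℕ) :
    HasSum (fun i : ℕ => (x * r ^ i) ^ (k + 1) / (k + 1 : ℝ))
      (x ^ (k + 1) / ((k + 1) * (1 - r ^ (k + 1)))) := by
  have hrk : |r ^ (k + 1)| < 1 := by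
    rw [abs_pow]; exact pow_lt_one₀ (abs_nonneg r) hr k.succ_ne_zero
  have hsum := (hasSum_geometric_of_abs_lt_one hrk).mul_left (x ^ (k + 1) / (k + 1))
  rw [div_mul_eq_div_div, div_eq_mul_inv _ (1 - _)]
  refine hsum.congr_fun fun i => ?_
  rw [mul_pow, ← pow_mul, mul_comm i, pow_mul]
  ring

lemma summable_pow_succ_div_mul_one_sub_pow (hx : |x| < 1) (hr : |r| < 1) :
    Summable fun k : ℕ => x ^ (k + 1) / ((k + 1) * (1 - r ^ (k + 1))) :=
  ((summable_pow_succ_div_of_abs_lt_one hx hr).hasSum.prod_fiberwise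
    (hasSum_pow_succ_div_geometric hr)).summable

theorem hasSum_log_one_sub_mul_geometric (hx : |x| < 1) (hr : |r| < 1) :
    HasSum (fun i : ℕ => log (1 - x * r ^ i))
      (-∑' k : ℕ, x ^ (k + 1) / ((k + 1) * (1 - r ^ (k + 1)))) := by
  have hsum := summable_pow_succ_div_of_abs_lt_one hx hr
  have hrows : ∑' k : ℕ, x ^ (k + 1) / ((k + 1) * (1 - r ^ (k + 1))) = ∑' p : ℕ × ℕ,
      (x * r ^ p.2) ^ (p.1 + 1) / (p.1 + 1 : ℝ) :=
    (hsum.hasSum.prod_fiberwise (hasSum_pow_succ_div_geometric hr)).tsum_eq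
  have hcols : HasSum (fun i : ℕ => -log (1 - x * r ^ i)) (∑' p : ℕ × ℕ,
      (x * r ^ p.2) ^ (p.1 + 1) / (p.1 + 1 : ℝ)) := by
    have hswap : Summable fun p : ℕ × ℕ => (x * r ^ p.1) ^ (p.2 + 1) / (p.2 + 1 : ℝ) :=
      hsum.prod_symm
    rw [← (Equiv.prodComm ℕ ℕ).tsum_eq]
    exact hswap.hasSum.prod_fiberwise fun i =>
      hasSum_pow_div_log_of_abs_lt_one (x := x * r ^ i) (abs_mul_pow_lt_one hx hr.le i)
  simpa [hrows] using hcols.neg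

theorem hasProd_prod_one_sub_mul_geometric {ι : Type*} {s : Finset ι} {x : ι → ℝ}
    (hx : ∀ j ∈ s, |x j| < 1) (hr : |r| < 1) :
    HasProd (fun i : ℕ => ∏ j ∈ s, (1 - x j * r ^ i))
      (exp (-∑' k : ℕ, ∑ j ∈ s, x j ^ (k + 1) / ((k + 1) * (1 - r ^ (k + 1))))) := by
  have hpos (i : ℕ) : ∀ j ∈ s, 0 < 1 - x j * r ^ i := fun j hj =>
    sub_pos.2 (lt_of_abs_lt (abs_mul_pow_lt_one (hx j hj) hr.le i))
  have hlog : HasSum (fun i : ℕ => log (∏ j ∈ s, (1 - x j * r ^ i)))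
      (-∑' k : ℕ, ∑ j ∈ s, x j ^ (k + 1) / ((k + 1) * (1 - r ^ (k + 1)))) := by
    simp_rw [log_prod fun j hj => (hpos _ j hj).ne']
    rw [Summable.tsum_finsetSum fun j hj => summable_pow_succ_div_mul_one_sub_pow (hx j hj) hr,
      ← sum_neg_distrib]
    exact hasSum_sum fun j hj => hasSum_log_one_sub_mul_geometric (hx j hj) hr
  convert hlog.rexp using 1
  ext i
  exact (exp_log (prod_pos (hpos i))).symm

end LogOneSubMulGeometric

lemma sum_range_mul_pow_pow {K : Type*} [Field K] {q : K} {n : ℕ} (hq : q ^ n ≠ 1) (y : K)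
    (m : ℕ) : ∑ j ∈ range m, (y * q ^ j) ^ n = (1 - q ^ (m * n)) / (1 - q ^ n) * y ^ n := by
  have hterm (j : ℕ) : (y * q ^ j) ^ n = y ^ n * (q ^ n) ^ j := by ring
  simp_rw [hterm, ← mul_sum, geom_sum_eq hq, ← pow_mul, mul_comm n m]
  rw [← neg_div_neg_eq, neg_sub, neg_sub]
  ring

theorem stmt_18_general (α q c : ℝ) (hα : α ∈ Set.Ioo (0 : ℝ) 1) (hq : q ∈ Set.Ioo (0 : ℝ) 1)
    (hc : c ∈ Set.Ioo (0 : ℝ) 1) (m : ℕ)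
    (Ψ : ℝ → ℝ) (hΨ : ∀ z, Ψ z = ∏ j ∈ Finset.range m, (1 - c * q ^ j * (1 - z))) :
    ∀ z ∈ Set.Icc (0 : ℝ) 1,
      (Summable fun k : ℕ =>
        |((1 - q ^ (m * (k + 1))) / (1 - q ^ (k + 1))) * c ^ (k + 1)
          / ((k + 1 : ℝ) * (1 - α ^ (k + 1))) * (1 - z) ^ (k + 1)|) ∧
      (∏' i : ℕ, Ψ (1 - α ^ i + α ^ i * z)) =
        Real.exp (- ∑' k : ℕ,
          ((1 - q ^ (m * (k + 1))) / (1 - q ^ (k + 1))) * c ^ (k + 1)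
            / ((k + 1 : ℝ) * (1 - α ^ (k + 1))) * (1 - z) ^ (k + 1)) := by
  rintro z ⟨hz0, hz1⟩
  obtain ⟨hq0, hq1⟩ := hq
  obtain ⟨hc0, hc1⟩ := hc
  have hα' : |α| < 1 := by rw [abs_of_pos hα.1]; exact hα.2
  have hx : ∀ j ∈ range m, |c * (1 - z) * q ^ j| < 1 := fun j _ => by
    have hqj : 0 ≤ q ^ j ∧ q ^ j ≤ 1 := ⟨pow_nonneg hq0.le j, pow_le_one₀ hq0.le hq1.le⟩
    rw [abs_of_nonneg (mul_nonneg (mul_nonneg hc0.le (by linarith)) hqj.1)]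
    calc c * (1 - z) * q ^ j ≤ c * 1 * 1 := by gcongr <;> linarith
      _ < 1 := by linarith
  have hterm (k : ℕ) : ((1 - q ^ (m * (k + 1))) / (1 - q ^ (k + 1))) * c ^ (k + 1)
      / ((k + 1 : ℝ) * (1 - α ^ (k + 1))) * (1 - z) ^ (k + 1)
      = ∑ j ∈ range m, (c * (1 - z) * q ^ j) ^ (k + 1) / ((k + 1) * (1 - α ^ (k + 1))) := by
    rw [← sum_div, sum_range_mul_pow_pow (pow_lt_one₀ hq0.le hq1 k.add_one_ne_zero).ne, mul_pow]
    ring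
  simp_rw [hterm]
  refine ⟨(summable_sum fun j hj =>
    summable_pow_succ_div_mul_one_sub_pow (hx j hj) hα').abs, ?_⟩
  rw [← (hasProd_prod_one_sub_mul_geometric hx hα').tprod_eq]
  congr 1
  ext i
  rw [hΨ]
  exact prod_congr rfl fun j _ => by ring

/-- Let `α, q, c ∈ (0,1)` and let `m ≥ 1` be an integer. Let
`Ψ(z) = ∏_{j=0}^{m−1} (1 − c q^j (1 − z))` be the pgf of the Poissonian Binomial(m, q, c)
distribution. Then the marginal pgf of the stationary INAR(1) process with these
innovations satisfies, for every `z ∈ [0,1]`,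
`∏_{i=0}^∞ Ψ(1 − α^i + α^i z)
   = exp(− ∑_{n=1}^∞ ((1 − q^{m n})/(1 − q^n)) c^n / (n (1 − α^n)) (1 − z)^n)`,
the series in the exponent converging absolutely (indexed by `n = k + 1`, `k ∈ ℕ`). -/
theorem stmt_18 (α q c : ℝ) (hα : α ∈ Set.Ioo (0 : ℝ) 1) (hq : q ∈ Set.Ioo (0 : ℝ) 1)
    (hc : c ∈ Set.Ioo (0 : ℝ) 1) (m : ℕ) (hm : 1 ≤ m)
    (Ψ : ℝ → ℝ) (hΨ : ∀ z, Ψ z = ∏ j ∈ Finset.range m, (1 - c * q ^ j * (1 - z))) :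
    ∀ z ∈ Set.Icc (0 : ℝ) 1,
      (Summable fun k : ℕ =>
        |((1 - q ^ (m * (k + 1))) / (1 - q ^ (k + 1))) * c ^ (k + 1)
          / ((k + 1 : ℝ) * (1 - α ^ (k + 1))) * (1 - z) ^ (k + 1)|) ∧
      (∏' i : ℕ, Ψ (1 - α ^ i + α ^ i * z)) =
        Real.exp (- ∑' k : ℕ,
          ((1 - q ^ (m * (k + 1))) / (1 - q ^ (k + 1))) * c ^ (k + 1)
            / ((k + 1 : ℝ) * (1 - α ^ (k + 1))) * (1 - z) ^ (k + 1)) :=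
  stmt_18_general α q c hα hq hc m Ψ hΨ
end
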